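/- Let 0 < μ ≤ L, Q := L/μ ≥ 1, σ ∈ [0, 1), integer n ≥ 1. Set α := (1−σ²)²/(187QL) and let T be any integer with T ≥ (1496Q²/(1−σ²)²)·log(200Q). Then with q := (1, 1, 1453/(1−σ²)²), ‖ J_α^T + (I₃ − J_α)^{−1} H_α ‖_∞^q ≤ 0.7. Consequently, any sequence of entrywise-nonnegative vectors (u^{tT})_{t≥0} in ℝ³ satisfying u^{(t+1)T} ≤ (J_α^T + (I₃ − J_α)^{−1} H_α) u^{tT} entrywise obeys ‖u^{(t+1)T}‖_∞^q ≤ 0.7 ‖u^{tT}‖_∞^q for all t ≥ 0, i.e., linear decay at rate 0.7 per outer loop. -/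

import Mathlib

/-- The system matrix `J_α` governing GT-SVRG. -/
noncomputable def GTSVRGMatrixJ (μ L σ α : ℝ) : Matrix (Fin 3) (Fin 3) ℝ :=
  !![(1 + σ ^ 2) / 2, 0, 2 * α ^ 2 * L ^ 2 / (1 - σ ^ 2);
     2 * L ^ 2 * α / μ, 1 - μ * α / 2, 0;
     120 / (1 - σ ^ 2), 87 / (1 - σ ^ 2), (3 + σ ^ 2) / 4]

/-- The input matrix `H_α` governing GT-SVRG. -/
noncomputable def GTSVRGMatrixH (L σ α : ℝ) (n : ℕ) : Matrix (Fin 3) (Fin 3) ℝ :=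
  !![0, 0, 0;
     4 * L ^ 2 * α ^ 2 / n, 4 * L ^ 2 * α ^ 2 / n, 0;
     38 / (1 - σ ^ 2), 38 / (1 - σ ^ 2), 0]

/-- The weighted infinity matrix norm `‖A‖_∞^w = max_i (∑_j |A i j| * w j) / w i`
induced by a positive weight vector `w`. -/
noncomputable def wInfMatNorm {d : ℕ} (w : Fin d → ℝ) (A : Matrix (Fin d) (Fin d) ℝ) : ℝ :=
  ⨆ i, (∑ j, |A i j| * w j) / w i

/-- The weighted infinity vector norm `‖v‖_∞^w = max_i |v i| / w i`. -/
noncomputable def wInfVecNorm {d : ℕ} (w v : Fin d → ℝ) : ℝ :=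
  ⨆ i, |v i| / w i

/-!
With `s = 1 - σ²`, the nonnegative matrix `J_α` contracts the positive vector
`w = (1, 8Q², 6528Q²/s²)` by `ρ = 1 - s²/(748Q²)`, so `J_α^T w ≤ ρ^T w`. As `q ≤ w ≤ 8Q² q` and
`ρ^T ≤ exp(-s²T/(748Q²)) ≤ (200Q)⁻²` by the choice of `T`, this gives `J_α^T q ≤ q / 5000`.
The input matrix has rank one, `H_α = h (1, 1, 0)ᵀ`, so `(I - J_α)⁻¹ H_α = x (1, 1, 0)ᵀ` where `x`
solves `(I - J_α) x = h` explicitly, and `2x ≤ 0.6 q`. Both summands are nonnegative, hence the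
weighted row sums of `J_α^T + (I - J_α)⁻¹ H_α` are at most `(1/5000 + 0.6) q ≤ 0.7 q`; the decay of
the sequence is the compatibility of the weighted vector and matrix norms.
-/

open Matrix Real

section WeightedNorm

variable {d : ℕ} {w : Fin d → ℝ}

lemma wInfVecNorm_nonneg (hw : ∀ i, 0 < w i) (v : Fin d → ℝ) : 0 ≤ wInfVecNorm w v :=
  Real.iSup_nonneg fun i => div_nonneg (abs_nonneg _) (hw i).le

lemma wInfMatNorm_nonneg (hw : ∀ i, 0 < w i) (A : Matrix (Fin d) (Fin d) ℝ) :
    0 ≤ wInfMatNorm w A :=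
  Real.iSup_nonneg fun i =>
    div_nonneg (Finset.sum_nonneg fun j _ => mul_nonneg (abs_nonneg _) (hw j).le) (hw i).le

lemma abs_le_wInfVecNorm_mul (hw : ∀ i, 0 < w i) (v : Fin d → ℝ) (i : Fin d) :
    |v i| ≤ wInfVecNorm w v * w i :=
  (div_le_iff₀ (hw i)).1 <| le_ciSup (Finite.bddAbove_range fun i => |v i| / w i) i

lemma sum_abs_mul_le_wInfMatNorm_mul (hw : ∀ i, 0 < w i) (A : Matrix (Fin d) (Fin d) ℝ)
    (i : Fin d) : ∑ j, |A i j| * w j ≤ wInfMatNorm w A * w i :=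
  (div_le_iff₀ (hw i)).1 <|
    le_ciSup (Finite.bddAbove_range fun i => (∑ j, |A i j| * w j) / w i) i

lemma wInfVecNorm_le_of_le_mulVec (hw : ∀ i, 0 < w i) {A : Matrix (Fin d) (Fin d) ℝ}
    {u v : Fin d → ℝ} (hv : 0 ≤ v) (hvu : v ≤ A *ᵥ u) :
    wInfVecNorm w v ≤ wInfMatNorm w A * wInfVecNorm w u := by
  refine Real.iSup_le (fun i => ?_)
    (mul_nonneg (wInfMatNorm_nonneg hw A) (wInfVecNorm_nonneg hw u))
  rw [abs_of_nonneg (hv i), div_le_iff₀ (hw i)]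
  calc v i ≤ ∑ j, A i j * u j := hvu i
    _ ≤ ∑ j, |A i j| * (wInfVecNorm w u * w j) := Finset.sum_le_sum fun j _ =>
      calc A i j * u j ≤ |A i j| * |u j| := (le_abs_self _).trans_eq (abs_mul _ _)
        _ ≤ |A i j| * (wInfVecNorm w u * w j) := by
          gcongr
          exact abs_le_wInfVecNorm_mul hw u j
    _ = (∑ j, |A i j| * w j) * wInfVecNorm w u := by
      rw [Finset.sum_mul]
      exact Finset.sum_congr rfl fun j _ => by ring
    _ ≤ wInfMatNorm w A * w i * wInfVecNorm w u := by
      gcongr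
      · exact wInfVecNorm_nonneg hw u
      · exact sum_abs_mul_le_wInfMatNorm_mul hw A i
    _ = wInfMatNorm w A * wInfVecNorm w u * w i := by ring

lemma wInfMatNorm_le_of_mulVec_le [NeZero d] (hw : ∀ i, 0 < w i)
    {A : Matrix (Fin d) (Fin d) ℝ} (hA : ∀ i j, 0 ≤ A i j) {c : ℝ} (h : A *ᵥ w ≤ c • w) :
    wInfMatNorm w A ≤ c := by
  refine ciSup_le fun i => ?_
  rw [div_le_iff₀ (hw i)]
  calc ∑ j, |A i j| * w j = (A *ᵥ w) i := by simp only [abs_of_nonneg (hA i _)]; rfl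
    _ ≤ c * w i := h i

end WeightedNorm

namespace Matrix

variable {m : Type*} [Fintype m] {A : Matrix m m ℝ}

lemma mulVec_mono_of_nonneg (hA : ∀ i j, 0 ≤ A i j) {u v : m → ℝ} (huv : u ≤ v) :
    A *ᵥ u ≤ A *ᵥ v :=
  fun i => dotProduct_le_dotProduct_of_nonneg_left huv (hA i)

lemma pow_mulVec_le_of_mulVec_le [DecidableEq m] (hA : ∀ i j, 0 ≤ A i j) {w : m → ℝ} {ρ : ℝ}
    (hρ : 0 ≤ ρ) (h : A *ᵥ w ≤ ρ • w) (k : ℕ) : A ^ k *ᵥ w ≤ ρ ^ k • w := by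
  induction k with
  | zero => simp
  | succ k ih =>
    calc A ^ (k + 1) *ᵥ w = A *ᵥ (A ^ k *ᵥ w) := by rw [pow_succ', mulVec_mulVec]
      _ ≤ A *ᵥ (ρ ^ k • w) := mulVec_mono_of_nonneg hA ih
      _ = ρ ^ k • A *ᵥ w := by rw [mulVec_smul]
      _ ≤ ρ ^ k • ρ • w := smul_le_smul_of_nonneg_left h (pow_nonneg hρ k)
      _ = ρ ^ (k + 1) • w := by rw [smul_smul, pow_succ]

end Matrix

lemma one_sub_pow_le_inv_of_log_div_le {δ K : ℝ} {T : ℕ} (hδ0 : 0 < δ) (hδ1 : δ ≤ 1)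
    (hK : 0 < K) (hT : log K / δ ≤ T) : (1 - δ) ^ T ≤ K⁻¹ :=
  calc (1 - δ) ^ T ≤ exp (-δ) ^ T := by
        gcongr
        linarith [add_one_le_exp (-δ)]
    _ = exp (-(δ * T)) := by rw [← exp_nat_mul]; ring_nf
    _ ≤ exp (-log K) := by
        gcongr
        rwa [div_le_iff₀' hδ0] at hT
    _ = K⁻¹ := by rw [Real.exp_neg, exp_log hK]

/-- `J_α` in the variables `s = 1 - σ²` and `Q`, after substituting `α = s²/(187QL)` and `L = Qμ`;
`gtsvrgH` is `H_α` in the same variables. -/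
noncomputable def gtsvrgJ (s Q : ℝ) : Matrix (Fin 3) (Fin 3) ℝ :=
  !![1 - s / 2, 0, 2 * s ^ 3 / (34969 * Q ^ 2);
     2 * s ^ 2 / 187, 1 - s ^ 2 / (374 * Q ^ 2), 0;
     120 / s, 87 / s, 1 - s / 4]

noncomputable def gtsvrgH (s Q : ℝ) (n : ℕ) : Matrix (Fin 3) (Fin 3) ℝ :=
  vecMulVec ![0, 4 * s ^ 4 / (34969 * Q ^ 2 * n), 38 / s] ![1, 1, 0]

/-- The solution `x` of `(1 - gtsvrgJ s Q) x = h`, where `gtsvrgH s Q n = h (1, 1, 0)ᵀ`. -/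
noncomputable def gtsvrgGain (s Q : ℝ) (n : ℕ) : Fin 3 → ℝ :=
  (5497987 * Q ^ 2 - 359040)⁻¹ • ![11136 * s ^ 2 / n + 113696,
    8 * s ^ 2 * (34969 * Q ^ 2 - 1920) / n + 454784 * Q ^ 2,
    97353696 * Q ^ 2 / n + 993958856 * Q ^ 2 / s ^ 2]

section GTSVRG

variable {s Q : ℝ}

lemma gtsvrgWeight_pos (hs : 0 < s) (i : Fin 3) :
    0 < (![1, 1, 1453 / s ^ 2] : Fin 3 → ℝ) i := by
  fin_cases i <;> simp only [Fin.isValue, Fin.zero_eta, Fin.mk_one, Fin.reduceFinMk, cons_val,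
    cons_val_zero, cons_val_one] <;>
    positivity

lemma GTSVRGMatrixJ_eq_gtsvrgJ {μ L σ : ℝ} (hμ : μ ≠ 0) (hL : L ≠ 0) (hQ : Q = L / μ) :
    GTSVRGMatrixJ μ L σ ((1 - σ ^ 2) ^ 2 / (187 * Q * L)) = gtsvrgJ (1 - σ ^ 2) Q := by
  subst hQ
  ext i j
  fin_cases i <;> fin_cases j <;>
    simp only [GTSVRGMatrixJ, gtsvrgJ, of_apply, cons_val', cons_val_fin_one, Fin.isValue,
      Fin.zero_eta, Fin.mk_one, Fin.reduceFinMk, cons_val, cons_val_zero, cons_val_one] <;>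
    field_simp <;> ring

lemma GTSVRGMatrixH_eq_gtsvrgH {μ L σ : ℝ} (n : ℕ) (hμ : μ ≠ 0) (hL : L ≠ 0) (hQ : Q = L / μ) :
    GTSVRGMatrixH L σ ((1 - σ ^ 2) ^ 2 / (187 * Q * L)) n = gtsvrgH (1 - σ ^ 2) Q n := by
  subst hQ
  ext i j
  fin_cases i <;> fin_cases j <;>
    simp only [GTSVRGMatrixH, gtsvrgH, vecMulVec_apply, of_apply, cons_val', cons_val_fin_one,
      Fin.isValue, Fin.zero_eta, Fin.mk_one, Fin.reduceFinMk, cons_val, cons_val_zero,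
      cons_val_one] <;>
    field_simp <;> ring

lemma gtsvrgJ_nonneg (hs0 : 0 < s) (hs1 : s ≤ 1) (hQ : 1 ≤ Q) (i j : Fin 3) :
    0 ≤ gtsvrgJ s Q i j := by
  have : s ^ 2 / (374 * Q ^ 2) ≤ 1 := by
    rw [div_le_one (by positivity)]
    nlinarith
  fin_cases i <;> fin_cases j <;>
    simp only [gtsvrgJ, of_apply, cons_val', cons_val_fin_one, Fin.isValue, Fin.zero_eta,
      Fin.mk_one, Fin.reduceFinMk, cons_val, cons_val_zero, cons_val_one] <;>
    first | positivity | linarith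

lemma gtsvrgJ_mulVec_le (hs0 : 0 < s) (hs1 : s ≤ 1) (hQ : 1 ≤ Q) :
    gtsvrgJ s Q *ᵥ ![1, 8 * Q ^ 2, 6528 * Q ^ 2 / s ^ 2] ≤
      (1 - s ^ 2 / (748 * Q ^ 2)) • ![1, 8 * Q ^ 2, 6528 * Q ^ 2 / s ^ 2] := by
  have hs : s * s ≤ s := mul_le_of_le_one_right hs0.le hs1
  have hsQ : s ≤ s * Q ^ 2 := le_mul_of_one_le_right hs0.le (one_le_pow₀ hQ)
  intro i
  fin_cases i <;>
    simp only [gtsvrgJ, mulVec, dotProduct, Fin.sum_univ_three, Pi.smul_apply, smul_eq_mul,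
      of_apply, cons_val', cons_val_fin_one, Fin.isValue, Fin.zero_eta, Fin.mk_one, Fin.reduceFinMk,
      cons_val, cons_val_zero, cons_val_one] <;>
    rw [← sub_nonneg] <;>
    field_simp <;> nlinarith

lemma gtsvrgJ_pow_mulVec_le (hs0 : 0 < s) (hs1 : s ≤ 1) (hQ : 1 ≤ Q) {T : ℕ}
    (hT : 1496 * Q ^ 2 / s ^ 2 * log (200 * Q) ≤ T) :
    gtsvrgJ s Q ^ T *ᵥ ![1, 1, 1453 / s ^ 2] ≤ (1 / 5000 : ℝ) • ![1, 1, 1453 / s ^ 2] := by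
  set q : Fin 3 → ℝ := ![1, 1, 1453 / s ^ 2]
  set w : Fin 3 → ℝ := ![1, 8 * Q ^ 2, 6528 * Q ^ 2 / s ^ 2]
  set δ := s ^ 2 / (748 * Q ^ 2)
  have hQ2 : 1 ≤ Q ^ 2 := one_le_pow₀ hQ
  have hδ0 : 0 < δ := by positivity
  have hδ1 : δ ≤ 1 := by
    rw [div_le_one (by positivity)]
    nlinarith
  have hq : 0 ≤ q := fun i => (gtsvrgWeight_pos hs0 i).le
  have hqw : q ≤ w := by
    intro i
    fin_cases i <;>
      simp only [q, w, le_refl, Fin.isValue, Fin.zero_eta, Fin.mk_one, Fin.reduceFinMk, cons_val,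
        cons_val_zero, cons_val_one]
    · nlinarith
    · gcongr; nlinarith
  have hwq : w ≤ (8 * Q ^ 2) • q := by
    intro i
    fin_cases i <;>
      simp only [q, w, Pi.smul_apply, smul_eq_mul, mul_one, le_refl, Fin.isValue, Fin.zero_eta,
        Fin.mk_one, Fin.reduceFinMk, cons_val, cons_val_zero, cons_val_one]
    · nlinarith
    · rw [mul_div_assoc', div_le_div_iff_of_pos_right (by positivity)]
      nlinarith
  have hdecay : (1 - δ) ^ T * (8 * Q ^ 2) ≤ 1 / 5000 := by
    have h : (1 - δ) ^ T ≤ ((200 * Q) ^ 2)⁻¹ := by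
      refine one_sub_pow_le_inv_of_log_div_le hδ0 hδ1 (by positivity) (le_of_eq_of_le ?_ hT)
      simp only [δ]
      rw [log_pow]
      field_simp
      ring
    calc (1 - δ) ^ T * (8 * Q ^ 2) ≤ ((200 * Q) ^ 2)⁻¹ * (8 * Q ^ 2) := by gcongr
      _ = 1 / 5000 := by field_simp; ring
  have hJ := gtsvrgJ_nonneg hs0 hs1 hQ
  calc gtsvrgJ s Q ^ T *ᵥ q ≤ gtsvrgJ s Q ^ T *ᵥ w :=
        mulVec_mono_of_nonneg (pow_apply_nonneg hJ T) hqw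
    _ ≤ (1 - δ) ^ T • w :=
        pow_mulVec_le_of_mulVec_le hJ (by linarith) (gtsvrgJ_mulVec_le hs0 hs1 hQ) T
    _ ≤ (1 - δ) ^ T • (8 * Q ^ 2) • q :=
        smul_le_smul_of_nonneg_left hwq (pow_nonneg (by linarith) T)
    _ = ((1 - δ) ^ T * (8 * Q ^ 2)) • q := smul_smul _ _ _
    _ ≤ (1 / 5000 : ℝ) • q := smul_le_smul_of_nonneg_right hdecay hq

lemma det_one_sub_gtsvrgJ (hs : s ≠ 0) (hQ : Q ≠ 0) :
    (1 - gtsvrgJ s Q).det = s ^ 4 * (5497987 * Q ^ 2 - 359040) / (19565295376 * Q ^ 4) := by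
  rw [det_fin_three]
  simp only [gtsvrgJ, Matrix.sub_apply, one_apply, Fin.reduceEq, ↓reduceIte, of_apply, cons_val',
    cons_val_fin_one, Fin.isValue, cons_val, cons_val_zero, cons_val_one]
  field_simp
  ring

lemma one_sub_gtsvrgJ_mulVec_gtsvrgGain (hs : s ≠ 0) (hQ : Q ≠ 0)
    (hE : 5497987 * Q ^ 2 - 359040 ≠ 0) (n : ℕ) :
    (1 - gtsvrgJ s Q) *ᵥ gtsvrgGain s Q n = ![0, 4 * s ^ 4 / (34969 * Q ^ 2 * n), 38 / s] := by
  ext i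
  fin_cases i <;>
    simp only [gtsvrgJ, gtsvrgGain, mulVec, dotProduct, Fin.sum_univ_three, Matrix.sub_apply,
      one_apply, Fin.reduceEq, ↓reduceIte, Pi.smul_apply, smul_eq_mul, of_apply, cons_val',
      cons_val_fin_one, Fin.isValue, Fin.zero_eta, Fin.mk_one, Fin.reduceFinMk, cons_val,
      cons_val_zero, cons_val_one] <;>
    field_simp <;> ring

lemma inv_one_sub_gtsvrgJ_mul_gtsvrgH (hs0 : 0 < s) (hQ : 1 ≤ Q) (n : ℕ) :
    (1 - gtsvrgJ s Q)⁻¹ * gtsvrgH s Q n = vecMulVec (gtsvrgGain s Q n) ![1, 1, 0] := by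
  have hQ0 : Q ≠ 0 := by positivity
  have hE : 0 < 5497987 * Q ^ 2 - 359040 := by nlinarith
  have hdet : IsUnit (1 - gtsvrgJ s Q).det := by
    rw [det_one_sub_gtsvrgJ hs0.ne' hQ0]
    exact (by positivity : (0 : ℝ) < _).ne'.isUnit
  rw [gtsvrgH, ← one_sub_gtsvrgJ_mulVec_gtsvrgGain hs0.ne' hQ0 hE.ne', ← mul_vecMulVec,
    nonsing_inv_mul_cancel_left _ _ hdet]

lemma gtsvrgGain_nonneg (hs0 : 0 < s) (hQ : 1 ≤ Q) (n : ℕ) : 0 ≤ gtsvrgGain s Q n := by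
  have hE : 0 < 5497987 * Q ^ 2 - 359040 := by nlinarith
  have h1920 : 0 ≤ 34969 * Q ^ 2 - 1920 := by nlinarith
  refine smul_nonneg (inv_nonneg.2 hE.le) fun i => ?_
  fin_cases i <;> simp only [Pi.zero_apply, Fin.isValue, Fin.zero_eta, Fin.mk_one, Fin.reduceFinMk,
    cons_val, cons_val_zero, cons_val_one] <;>
    positivity

lemma gtsvrgGain_le (hs0 : 0 < s) (hs1 : s ≤ 1) (hQ : 1 ≤ Q) {n : ℕ} (hn : 1 ≤ n) :
    gtsvrgGain s Q n ≤ (3 / 10 : ℝ) • ![1, 1, 1453 / s ^ 2] := by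
  have hQ2 : 1 ≤ Q ^ 2 := one_le_pow₀ hQ
  have hE : 0 < 5497987 * Q ^ 2 - 359040 := by nlinarith
  have hn' : (1 : ℝ) ≤ n := by exact_mod_cast hn
  have hs2 : s ^ 2 ≤ 1 := pow_le_one₀ hs0.le hs1
  intro i
  fin_cases i <;>
    simp only [gtsvrgGain, Pi.smul_apply, smul_eq_mul, Fin.isValue, Fin.zero_eta, Fin.mk_one,
      Fin.reduceFinMk, cons_val, cons_val_zero, cons_val_one] <;>
    rw [inv_mul_le_iff₀ hE]
  · have : 11136 * s ^ 2 / n ≤ 11136 := by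
      rw [div_le_iff₀ (by positivity)]
      nlinarith
    nlinarith
  · have : 8 * s ^ 2 * (34969 * Q ^ 2 - 1920) / n ≤ 8 * 34969 * Q ^ 2 := by
      rw [div_le_iff₀ (by positivity)]
      nlinarith
    nlinarith
  · have : 97353696 * Q ^ 2 / n ≤ 97353696 * Q ^ 2 / s ^ 2 :=
      div_le_div_of_nonneg_left (by positivity) (by positivity) (hs2.trans hn')
    calc _ ≤ 97353696 * Q ^ 2 / s ^ 2 + 993958856 * Q ^ 2 / s ^ 2 := by gcongr
      _ = 1091312552 * Q ^ 2 / s ^ 2 := by ring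
      _ ≤ (5497987 * Q ^ 2 - 359040) * (3 / 10 * 1453) / s ^ 2 :=
        div_le_div_of_nonneg_right (by linarith) (by positivity)
      _ = _ := by ring

theorem wInfMatNorm_gtsvrg_outer_le (hs0 : 0 < s) (hs1 : s ≤ 1) (hQ : 1 ≤ Q) {n : ℕ}
    (hn : 1 ≤ n) {T : ℕ} (hT : 1496 * Q ^ 2 / s ^ 2 * log (200 * Q) ≤ T) :
    wInfMatNorm ![1, 1, 1453 / s ^ 2]
      (gtsvrgJ s Q ^ T + (1 - gtsvrgJ s Q)⁻¹ * gtsvrgH s Q n) ≤ 0.7 := by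
  set q : Fin 3 → ℝ := ![1, 1, 1453 / s ^ 2]
  have hq : ∀ i, 0 < q i := gtsvrgWeight_pos hs0
  have hx := gtsvrgGain_nonneg hs0 hQ n
  have hP : vecMulVec (gtsvrgGain s Q n) ![1, 1, 0] *ᵥ q = (2 : ℝ) • gtsvrgGain s Q n := by
    ext i
    simp only [q, mulVec, dotProduct, vecMulVec_apply, Fin.sum_univ_three, Pi.smul_apply,
      smul_eq_mul, Fin.isValue, cons_val, cons_val_zero, cons_val_one]
    ring
  rw [inv_one_sub_gtsvrgJ_mul_gtsvrgH hs0 hQ n]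
  refine wInfMatNorm_le_of_mulVec_le hq (fun i j => add_nonneg
    (pow_apply_nonneg (gtsvrgJ_nonneg hs0 hs1 hQ) T i j) ?_) ?_
  · exact mul_nonneg (hx i) (by fin_cases j <;> simp)
  · calc (gtsvrgJ s Q ^ T + vecMulVec (gtsvrgGain s Q n) ![1, 1, 0]) *ᵥ q
        = gtsvrgJ s Q ^ T *ᵥ q + (2 : ℝ) • gtsvrgGain s Q n := by rw [add_mulVec, hP]
      _ ≤ (1 / 5000 : ℝ) • q + (2 : ℝ) • (3 / 10 : ℝ) • q := by
        gcongr
        · exact gtsvrgJ_pow_mulVec_le hs0 hs1 hQ hT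
        · exact gtsvrgGain_le hs0 hs1 hQ hn
      _ = (1 / 5000 + 3 / 5 : ℝ) • q := by module
      _ ≤ (0.7 : ℝ) • q := smul_le_smul_of_nonneg_right (by norm_num) fun i => (hq i).le

end GTSVRG

/-- With `α = (1−σ²)²/(187QL)` and
`T ≥ (1496Q²/(1−σ²)²)·log(200Q)`, the outer-loop matrix of GT-SVRG satisfies
`‖J_α^T + (I₃ − J_α)⁻¹ H_α‖_∞^q ≤ 0.7` with `q = (1, 1, 1453/(1−σ²)²)`;
consequently any nonnegative sequence obeying the outer-loop recursion decays
linearly at rate `0.7` in the norm `‖·‖_∞^q`. -/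
theorem gtsvrg_outer_loop_contraction (μ L σ α Q : ℝ) (n : ℕ)
    (hμ : 0 < μ) (hμL : μ ≤ L) (hQ : Q = L / μ)
    (hσ0 : 0 ≤ σ) (hσ1 : σ < 1) (hn : 1 ≤ n)
    (hα : α = (1 - σ ^ 2) ^ 2 / (187 * Q * L))
    (T : ℕ) (hT : 1496 * Q ^ 2 / (1 - σ ^ 2) ^ 2 * Real.log (200 * Q) ≤ (T : ℝ)) :
    wInfMatNorm ![1, 1, 1453 / (1 - σ ^ 2) ^ 2]
        (GTSVRGMatrixJ μ L σ α ^ T +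
          (1 - GTSVRGMatrixJ μ L σ α)⁻¹ * GTSVRGMatrixH L σ α n) ≤ 0.7 ∧
      ∀ u : ℕ → Fin 3 → ℝ, (∀ t, 0 ≤ u t) →
        (∀ t, u (t + 1) ≤
          (GTSVRGMatrixJ μ L σ α ^ T +
            (1 - GTSVRGMatrixJ μ L σ α)⁻¹ * GTSVRGMatrixH L σ α n).mulVec (u t)) →
        ∀ t, wInfVecNorm ![1, 1, 1453 / (1 - σ ^ 2) ^ 2] (u (t + 1)) ≤
          0.7 * wInfVecNorm ![1, 1, 1453 / (1 - σ ^ 2) ^ 2] (u t) := by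
  have hL : 0 < L := hμ.trans_le hμL
  have hs0 : 0 < 1 - σ ^ 2 := by nlinarith
  have hs1 : 1 - σ ^ 2 ≤ 1 := by nlinarith
  have hQ1 : 1 ≤ Q := by rw [hQ, le_div_iff₀ hμ]; linarith
  have hq := gtsvrgWeight_pos hs0
  subst hα
  rw [GTSVRGMatrixJ_eq_gtsvrgJ hμ.ne' hL.ne' hQ, GTSVRGMatrixH_eq_gtsvrgH n hμ.ne' hL.ne' hQ]
  have hnorm := wInfMatNorm_gtsvrg_outer_le hs0 hs1 hQ1 hn hT
  refine ⟨hnorm, fun u hu hrec t => ?_⟩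
  calc wInfVecNorm _ (u (t + 1)) ≤ _ * wInfVecNorm _ (u t) :=
        wInfVecNorm_le_of_le_mulVec hq (hu (t + 1)) (hrec t)
    _ ≤ 0.7 * wInfVecNorm _ (u t) :=
        mul_le_mul_of_nonneg_right hnorm (wInfVecNorm_nonneg hq (u t))
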